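/- arXiv:2412.20283 — 3 statements merged into one kernel-verified Lean document; each statement's English description precedes it below -/
import Mathlib

section
/- Let μᵢₖ ≥ 0 be real numbers, Φᵢₖ and dᵢₖ fixed matrices and scalars, W a symmetric positive definite matrix, ρ ∈ ℝ, λ > 0, G a matrix, ∂φ a matrix, and y a unit vector. If vec(2∂φ W yyᵀ − Σᵢₖ μᵢₖ Φᵢₖ) = 0 and yᵀ(−2λW + ρGGᵀ)y − Σᵢₖ μᵢₖ dᵢₖ > 0, then for every F satisfying Tr(FΦᵢₖ) ≤ dᵢₖ for all i,k, we have yᵀ(W ∂φᵀ Fᵀ + F ∂φ W + 2λW − ρGGᵀ)y < 0. -/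
open Matrix

/-- Column-wise vectorization: vec(M) is indexed by (column, row). -/
def vec {a b : ℕ} (M : Matrix (Fin a) (Fin b) ℝ) : Fin b × Fin a → ℝ :=
  fun p => M p.2 p.1

lemma trace_mul_vecMulVec {m : ℕ} (C : Matrix (Fin m) (Fin m) ℝ)
    (y : Fin m → ℝ) :
    (C * Matrix.vecMulVec y y).trace = y ⬝ᵥ C.mulVec y := by
  simp only [Matrix.trace, Matrix.diag, Matrix.mul_apply, Matrix.vecMulVec_apply,
    Matrix.mulVec, dotProduct, Finset.mul_sum]
  exact Finset.sum_congr rfl fun i _ => Finset.sum_congr rfl fun j _ => by ring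

/-- Constant-metric duality certificate (Theorem 1): if the multipliers μᵢₖ ≥ 0
    satisfy vec(2∂φ W yyᵀ − Σ μᵢₖ Φᵢₖ) = 0 and
    yᵀ(−2λW + ρGGᵀ)y − Σ μᵢₖ dᵢₖ > 0, then every F with Tr(FΦᵢₖ) ≤ dᵢₖ
    satisfies yᵀ(W∂φᵀFᵀ + F∂φW + 2λW − ρGGᵀ)y < 0. -/
theorem dual_certificate_contraction (n l mG T K : ℕ)
    (W : Matrix (Fin n) (Fin n) ℝ) (hW : W.PosDef)
    (G : Matrix (Fin n) (Fin mG) ℝ)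
    (dphi : Matrix (Fin l) (Fin n) ℝ)
    (Φ : Fin T → Fin K → Matrix (Fin l) (Fin n) ℝ)
    (d : Fin T → Fin K → ℝ)
    (μ : Fin T → Fin K → ℝ) (hμ : ∀ i k, 0 ≤ μ i k)
    (ρ lam : ℝ) (hlam : 0 < lam)
    (y : Fin n → ℝ) (hy : ‖(WithLp.equiv 2 (Fin n → ℝ)).symm y‖ = 1)
    (hvec : _root_.vec ((2 : ℝ) • (dphi * W * Matrix.vecMulVec y y)
                  - ∑ i, ∑ k, μ i k • Φ i k) = 0)
    (hpos : 0 < y ⬝ᵥ ((-(2 * lam)) • W + ρ • (G * Gᵀ)).mulVec y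
                  - ∑ i, ∑ k, μ i k * d i k) :
    ∀ F : Matrix (Fin n) (Fin l) ℝ, (∀ i k, (F * Φ i k).trace ≤ d i k) →
      y ⬝ᵥ (W * dphiᵀ * Fᵀ + F * dphi * W + (2 * lam) • W
              - ρ • (G * Gᵀ)).mulVec y < 0 := by
  intro F hF
  -- matrix equality from hvec
  have hmat : (2 : ℝ) • (dphi * W * Matrix.vecMulVec y y) = ∑ i, ∑ k, μ i k • Φ i k := by
    ext i j
    have := congrFun hvec (j, i)
    simpa [_root_.vec, sub_eq_zero] using this
  set M := F * dphi * W with hM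
  -- key trace identity
  have hkey : ∑ i, ∑ k, μ i k * (F * Φ i k).trace = 2 * (y ⬝ᵥ M.mulVec y) := by
    have : (F * ((2 : ℝ) • (dphi * W * Matrix.vecMulVec y y))).trace
        = (F * ∑ i, ∑ k, μ i k • Φ i k).trace := by rw [hmat]
    rw [Matrix.mul_smul, Matrix.trace_smul] at this
    rw [show F * (dphi * W * Matrix.vecMulVec y y) = M * Matrix.vecMulVec y y by
      rw [hM]; simp only [Matrix.mul_assoc]] at this
    rw [trace_mul_vecMulVec M y] at this
    rw [Matrix.mul_sum, Matrix.trace_sum] at this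
    simp only [Matrix.mul_sum, Matrix.trace_sum, Matrix.mul_smul, Matrix.trace_smul,
      smul_eq_mul] at this
    linarith [this]
  -- bound
  have hbound : ∑ i, ∑ k, μ i k * (F * Φ i k).trace ≤ ∑ i, ∑ k, μ i k * d i k := by
    apply Finset.sum_le_sum
    intro i _
    apply Finset.sum_le_sum
    intro k _
    exact mul_le_mul_of_nonneg_left (hF i k) (hμ i k)
  -- transpose identity
  have htrans : y ⬝ᵥ (W * dphiᵀ * Fᵀ).mulVec y = y ⬝ᵥ M.mulVec y := by
    have hMt : W * dphiᵀ * Fᵀ = Mᵀ := by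
      have hWt : Wᵀ = W := by
        have := hW.1.eq
        simpa using this
      rw [hM, Matrix.transpose_mul, Matrix.transpose_mul, hWt, Matrix.mul_assoc]
    rw [hMt, Matrix.mulVec_transpose, dotProduct_comm, ← Matrix.dotProduct_mulVec]
  -- expand and conclude
  simp only [Matrix.add_mulVec, Matrix.sub_mulVec, dotProduct_add, dotProduct_sub,
    Matrix.smul_mulVec, dotProduct_smul, smul_eq_mul, Matrix.neg_mulVec,
    dotProduct_neg, neg_mul] at hpos ⊢
  rw [htrans]
  nlinarith [hkey, hbound, hpos]
end

section
/- Let W(x) = W₀ + Σᵢ xᵢ W₁ᵢ + Σᵢⱼ xᵢxⱼ W₂ᵢⱼ be a second-order matrix polynomial with W(x) ⪰ αI for all x and some α > 0 (entries quadratic in x). Then there exist a matrix A and vector B such that λ_max(W(x)) ≤ ‖Ax + B‖₂² for all x ∈ ℝⁿ. -/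
open Matrix

/-- A second-order matrix polynomial W(x) = W₀ + Σᵢ xᵢW₁ᵢ + Σᵢⱼ xᵢxⱼW₂ᵢⱼ. -/
def quadMat {n : ℕ} (W0 : Matrix (Fin n) (Fin n) ℝ)
    (W1 : Fin n → Matrix (Fin n) (Fin n) ℝ)
    (W2 : Fin n → Fin n → Matrix (Fin n) (Fin n) ℝ)
    (x : Fin n → ℝ) : Matrix (Fin n) (Fin n) ℝ :=
  W0 + ∑ i, x i • W1 i + ∑ i, ∑ j, (x i * x j) • W2 i j

lemma sq_le_dot {n : ℕ} (v : Fin n → ℝ) (i : Fin n) : v i * v i ≤ v ⬝ᵥ v :=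
  Finset.single_le_sum (fun k _ => mul_self_nonneg (v k)) (Finset.mem_univ i)

lemma dot_nonneg {n : ℕ} (v : Fin n → ℝ) : 0 ≤ v ⬝ᵥ v :=
  Finset.sum_nonneg fun k _ => mul_self_nonneg (v k)

lemma abs_mul_le_dot {n : ℕ} (v : Fin n → ℝ) (i j : Fin n) : |v i * v j| ≤ v ⬝ᵥ v := by
  have hi := sq_le_dot v i
  have hj := sq_le_dot v j
  rcases abs_cases (v i * v j) with ⟨h, _⟩ | ⟨h, _⟩ <;> nlinarith

lemma abs_quadform_le {n : ℕ} (M : Matrix (Fin n) (Fin n) ℝ) (v : Fin n → ℝ) :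
    |v ⬝ᵥ M.mulVec v| ≤ (∑ i, ∑ j, |M i j|) * (v ⬝ᵥ v) := by
  have h1 : v ⬝ᵥ M.mulVec v = ∑ i, ∑ j, v i * (M i j * v j) := by
    simp [dotProduct, mulVec, Finset.mul_sum]
  rw [h1, Finset.sum_mul]
  calc |∑ i, ∑ j, v i * (M i j * v j)| ≤ ∑ i, |∑ j, v i * (M i j * v j)| :=
        Finset.abs_sum_le_sum_abs _ _
    _ ≤ ∑ i, ∑ j, |v i * (M i j * v j)| :=
        Finset.sum_le_sum fun i _ => Finset.abs_sum_le_sum_abs _ _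
    _ ≤ ∑ i, ∑ j, |M i j| * (v ⬝ᵥ v) := by
        refine Finset.sum_le_sum fun i _ => Finset.sum_le_sum fun j _ => ?_
        have h2 : v i * (M i j * v j) = M i j * (v i * v j) := by ring
        rw [h2, abs_mul]
        exact mul_le_mul_of_nonneg_left (abs_mul_le_dot v i j) (abs_nonneg _)
    _ = ∑ i, (∑ j, |M i j|) * (v ⬝ᵥ v) := by
        simp [Finset.sum_mul]

lemma sum_mulVec' {n : ℕ} {ι : Type*} (s : Finset ι) (A : ι → Matrix (Fin n) (Fin n) ℝ)
    (v : Fin n → ℝ) : (∑ i ∈ s, A i) *ᵥ v = ∑ i ∈ s, A i *ᵥ v := by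
  ext j
  simp [mulVec, dotProduct, Matrix.sum_apply, Finset.sum_apply, Finset.sum_mul]
  rw [Finset.sum_comm]

lemma dot_sum' {n : ℕ} {ι : Type*} (s : Finset ι) (w : ι → Fin n → ℝ) (v : Fin n → ℝ) :
    v ⬝ᵥ (∑ i ∈ s, w i) = ∑ i ∈ s, v ⬝ᵥ w i := by
  simp [dotProduct, Finset.sum_apply, Finset.mul_sum]
  rw [Finset.sum_comm]

lemma quadform_decomp {n : ℕ} (W0 : Matrix (Fin n) (Fin n) ℝ)
    (W1 : Fin n → Matrix (Fin n) (Fin n) ℝ)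
    (W2 : Fin n → Fin n → Matrix (Fin n) (Fin n) ℝ) (x v : Fin n → ℝ) :
    v ⬝ᵥ (quadMat W0 W1 W2 x).mulVec v =
      v ⬝ᵥ W0.mulVec v + (∑ k, x k * (v ⬝ᵥ (W1 k).mulVec v))
        + ∑ k, ∑ l, (x k * x l) * (v ⬝ᵥ (W2 k l).mulVec v) := by
  simp [quadMat, add_mulVec, dotProduct_add, sum_mulVec', dot_sum',
    Matrix.smul_mulVec, dotProduct_smul, smul_eq_mul]

lemma quadform_le {n : ℕ} (W0 : Matrix (Fin n) (Fin n) ℝ)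
    (W1 : Fin n → Matrix (Fin n) (Fin n) ℝ)
    (W2 : Fin n → Fin n → Matrix (Fin n) (Fin n) ℝ) (x v : Fin n → ℝ) :
    v ⬝ᵥ (quadMat W0 W1 W2 x).mulVec v ≤
      ((∑ i, ∑ j, |W0 i j|) + (∑ k, ∑ i, ∑ j, |W1 k i j|)
        + ∑ k, ∑ l, ∑ i, ∑ j, |W2 k l i j|) * (x ⬝ᵥ x + 1) * (v ⬝ᵥ v) := by
  set X := x ⬝ᵥ x with hXdef
  set V := v ⬝ᵥ v with hVdef
  have hX : 0 ≤ X := dot_nonneg x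
  have hV : 0 ≤ V := dot_nonneg v
  have hx1 : ∀ k, |x k| ≤ X + 1 := by
    intro k
    have := sq_le_dot x k
    rcases abs_cases (x k) with ⟨h, _⟩ | ⟨h, _⟩ <;> nlinarith
  have hx2 : ∀ k l, |x k * x l| ≤ X + 1 := fun k l =>
    (abs_mul_le_dot x k l).trans (by linarith)
  rw [quadform_decomp]
  set K0 := ∑ i, ∑ j, |W0 i j| with hK0
  set S1 := ∑ k, ∑ i, ∑ j, |W1 k i j| with hS1
  set S2 := ∑ k, ∑ l, ∑ i, ∑ j, |W2 k l i j| with hS2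
  have hK0n : 0 ≤ K0 := by positivity
  have t0 : v ⬝ᵥ W0.mulVec v ≤ K0 * ((X + 1) * V) := by
    have h1 := (le_abs_self _).trans (abs_quadform_le W0 v)
    rw [← hK0, ← hVdef] at h1
    nlinarith [mul_nonneg hK0n (mul_nonneg hX hV)]
  have t1 : (∑ k, x k * (v ⬝ᵥ (W1 k).mulVec v)) ≤ S1 * ((X + 1) * V) := by
    rw [hS1, Finset.sum_mul]
    refine Finset.sum_le_sum fun k _ => ?_
    have h1 := abs_quadform_le (W1 k) v
    have h2 : x k * (v ⬝ᵥ (W1 k).mulVec v) ≤ |x k| * |v ⬝ᵥ (W1 k).mulVec v| := by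
      rw [← abs_mul]; exact le_abs_self _
    have h3 : |x k| * |v ⬝ᵥ (W1 k).mulVec v| ≤ (X + 1) * ((∑ i, ∑ j, |W1 k i j|) * V) :=
      mul_le_mul (hx1 k) h1 (abs_nonneg _) (by linarith)
    calc x k * (v ⬝ᵥ (W1 k).mulVec v) ≤ (X + 1) * ((∑ i, ∑ j, |W1 k i j|) * V) :=
          h2.trans h3
      _ = (∑ i, ∑ j, |W1 k i j|) * ((X + 1) * V) := by ring
  have t2 : (∑ k, ∑ l, (x k * x l) * (v ⬝ᵥ (W2 k l).mulVec v)) ≤ S2 * ((X + 1) * V) := by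
    rw [hS2, Finset.sum_mul]
    refine Finset.sum_le_sum fun k _ => ?_
    rw [Finset.sum_mul]
    refine Finset.sum_le_sum fun l _ => ?_
    have h1 := abs_quadform_le (W2 k l) v
    have h2 : (x k * x l) * (v ⬝ᵥ (W2 k l).mulVec v)
        ≤ |x k * x l| * |v ⬝ᵥ (W2 k l).mulVec v| := by
      rw [← abs_mul]; exact le_abs_self _
    have h3 : |x k * x l| * |v ⬝ᵥ (W2 k l).mulVec v|
        ≤ (X + 1) * ((∑ i, ∑ j, |W2 k l i j|) * V) :=
      mul_le_mul (hx2 k l) h1 (abs_nonneg _) (by linarith)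
    calc (x k * x l) * (v ⬝ᵥ (W2 k l).mulVec v)
        ≤ (X + 1) * ((∑ i, ∑ j, |W2 k l i j|) * V) := h2.trans h3
      _ = (∑ i, ∑ j, |W2 k l i j|) * ((X + 1) * V) := by ring
  have hrhs : (K0 + S1 + S2) * (X + 1) * V
      = K0 * ((X + 1) * V) + S1 * ((X + 1) * V) + S2 * ((X + 1) * V) := by ring
  rw [hrhs]
  exact add_le_add (add_le_add t0 t1) t2

/-- For a symmetric second-order matrix polynomial W with W(x) ⪰ αI (α > 0),
    there exist A, B with λ_max(W(x)) ≤ ‖Ax + B‖₂² for all x; the eigenvalue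
    bound is expressed as ‖Ax+B‖₂² I − W(x) ⪰ 0, with
    ‖v‖₂² written as v ⬝ᵥ v. -/
theorem quadratic_metric_eigenvalue_bound (n : ℕ)
    (W0 : Matrix (Fin n) (Fin n) ℝ)
    (W1 : Fin n → Matrix (Fin n) (Fin n) ℝ)
    (W2 : Fin n → Fin n → Matrix (Fin n) (Fin n) ℝ)
    (α : ℝ) (hα : 0 < α)
    (hsym : ∀ x : Fin n → ℝ, (quadMat W0 W1 W2 x).IsSymm)
    (hlb : ∀ x : Fin n → ℝ,
      (quadMat W0 W1 W2 x - α • (1 : Matrix (Fin n) (Fin n) ℝ)).PosSemidef) :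
    ∃ (p : ℕ) (A : Matrix (Fin p) (Fin n) ℝ) (B : Fin p → ℝ),
      ∀ x : Fin n → ℝ,
        (((A.mulVec x + B) ⬝ᵥ (A.mulVec x + B)) •
            (1 : Matrix (Fin n) (Fin n) ℝ) - quadMat W0 W1 W2 x).PosSemidef := by
  classical
  set c := ((∑ i, ∑ j, |W0 i j|) + (∑ k, ∑ i, ∑ j, |W1 k i j|)
      + ∑ k, ∑ l, ∑ i, ∑ j, |W2 k l i j|) with hc
  have hcn : 0 ≤ c := by positivity
  set s := Real.sqrt c with hsdef
  have hss : s * s = c := Real.mul_self_sqrt hcn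
  refine ⟨n + 1, fun i j => if i = Fin.castSucc j then s else 0,
    fun i => if i = Fin.last n then s else 0, fun x => ?_⟩
  set A : Matrix (Fin (n + 1)) (Fin n) ℝ :=
    fun i j => if i = Fin.castSucc j then s else 0 with hA
  set B : Fin (n + 1) → ℝ := fun i => if i = Fin.last n then s else 0 with hB
  have hrow : ∀ j : Fin n, (A *ᵥ x + B) (Fin.castSucc j) = s * x j := by
    intro j
    have hne : Fin.castSucc j ≠ Fin.last n := (Fin.castSucc_lt_last j).ne
    simp [hA, hB, mulVec, dotProduct, Fin.castSucc_inj, hne, ite_mul]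
  have hlast : (A *ᵥ x + B) (Fin.last n) = s := by
    have hne : ∀ k : Fin n, Fin.last n ≠ Fin.castSucc k :=
      fun k => (Fin.castSucc_lt_last k).ne'
    simp [hA, hB, mulVec, dotProduct, hne, ite_mul]
  have hu : (A *ᵥ x + B) ⬝ᵥ (A *ᵥ x + B) = c * (x ⬝ᵥ x + 1) := by
    rw [dotProduct, Fin.sum_univ_castSucc]
    simp only [hrow, hlast]
    rw [show (∑ j : Fin n, s * x j * (s * x j)) = s * s * ∑ j : Fin n, x j * x j from by
      rw [Finset.mul_sum]; exact Finset.sum_congr rfl fun j _ => by ring]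
    rw [hss, dotProduct]
    ring
  rw [hu]
  have hW := hsym x
  rw [posSemidef_iff_dotProduct_mulVec]
  constructor
  · show _ᴴ = _
    ext i j
    have hW' : quadMat W0 W1 W2 x j i = quadMat W0 W1 W2 x i j :=
      congrFun (congrFun hW i) j
    by_cases h : i = j <;>
      simp [Matrix.sub_apply, Matrix.smul_apply, Matrix.one_apply, conjTranspose_apply,
        h, hW', eq_comm]
  · intro v
    have key := quadform_le W0 W1 W2 x v
    rw [← hc] at key
    have hV := dot_nonneg v
    have hexp : star v ⬝ᵥ ((c * (x ⬝ᵥ x + 1)) •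
          (1 : Matrix (Fin n) (Fin n) ℝ) - quadMat W0 W1 W2 x) *ᵥ v
        = c * (x ⬝ᵥ x + 1) * (v ⬝ᵥ v) - v ⬝ᵥ (quadMat W0 W1 W2 x).mulVec v := by
      simp [sub_mulVec, Matrix.smul_mulVec, one_mulVec, dotProduct_sub,
        dotProduct_smul, smul_eq_mul]
    rw [hexp]
    linarith
end

section
/- Suppose A, W, M ∈ ℝ^{n×n} with W = M⁻¹, W symmetric positive definite, and suppose −Ẇ + WAᵀ + AW + 2λW − ρ G Gᵀ ≺ 0 for scalars λ > 0, ρ, where Ẇ is a fixed symmetric matrix satisfying Ẇ = −W Ṁ W (i.e., Ṁ = −M Ẇ M). Then with K = −(ρ/2) Gᵀ M, the matrix Acl = A + GK satisfies Aclᵀ M + M Acl + Ṁ ≺ −2λ M. -/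
open Matrix

lemma posDef_conj_aux {n : ℕ} (S M : Matrix (Fin n) (Fin n) ℝ)
    (hS : S.PosDef) (hM : IsUnit M) : (Mᵀ * S * M).PosDef := by
  refine Matrix.PosDef.of_dotProduct_mulVec_pos ?_ ?_
  · have hS1 : Sᵀ = S := hS.isHermitian
    show (Mᵀ * S * M)ᵀ = Mᵀ * S * M
    simp [Matrix.transpose_mul, hS1, Matrix.mul_assoc]
  · intro x hx
    have hMx : M *ᵥ x ≠ 0 := by
      have hinj : Function.Injective (M.mulVec) :=
        Matrix.mulVec_injective_iff_isUnit.mpr hM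
      intro h
      exact hx (hinj (by simpa using h))
    have := hS.dotProduct_mulVec_pos hMx
    have hrw : star x ⬝ᵥ (Mᵀ * S * M) *ᵥ x
        = star (M *ᵥ x) ⬝ᵥ S *ᵥ (M *ᵥ x) := by
      simp only [star_trivial, ← Matrix.mulVec_mulVec]
      rw [Matrix.dotProduct_mulVec, Matrix.vecMul_transpose]
    rwa [hrw]

lemma posDef_congr_of_eq {n : ℕ} {X Y : Matrix (Fin n) (Fin n) ℝ}
    (h : X = Y) (hY : Y.PosDef) : X.PosDef := h ▸ hY

/-- Algebraic core of Proposition 2 (Manchester–Slotine): if W ≻ 0, M = W⁻¹,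
    Ṁ = −MẆM, and −Ẇ + WAᵀ + AW + 2λW − ρGGᵀ ≺ 0, then with
    K = −(ρ/2)GᵀM the closed-loop matrix Acl = A + GK satisfies
    AclᵀM + MAcl + Ṁ ≺ −2λM. -/
theorem closed_loop_contraction_congruence (n m : ℕ)
    (A W M Wd Md : Matrix (Fin n) (Fin n) ℝ)
    (G : Matrix (Fin n) (Fin m) ℝ) (lam ρ : ℝ) (hlam : 0 < lam)
    (hW : W.PosDef) (hM : M = W⁻¹)
    (hWdsym : Wd.IsSymm) (hMd : Md = -(M * Wd * M))
    (hineq : (-(-Wd + W * Aᵀ + A * W + (2 * lam) • W - ρ • (G * Gᵀ))).PosDef) :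
    ((-(2 * lam)) • M -
      ((A + G * ((-(ρ / 2)) • (Gᵀ * M)))ᵀ * M +
        M * (A + G * ((-(ρ / 2)) • (Gᵀ * M))) + Md)).PosDef := by
  have hWunit : IsUnit W := hW.isUnit
  have hMunit : IsUnit M := by rw [hM]; exact hW.inv.isUnit
  have hMW : M * W = 1 := by rw [hM]; exact Matrix.nonsing_inv_mul W (isUnit_iff_isUnit_det _ |>.1 hWunit)
  have hWM : W * M = 1 := by rw [hM]; exact Matrix.mul_nonsing_inv W (isUnit_iff_isUnit_det _ |>.1 hWunit)
  have hMsym : Mᵀ = M := by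
    rw [hM, Matrix.transpose_nonsing_inv]
    congr 1
    exact hW.isHermitian
  refine posDef_congr_of_eq ?_
    (posDef_conj_aux _ M hineq hMunit)
  rw [hMd]
  have key : ∀ X : Matrix (Fin n) (Fin n) ℝ, M * (W * X) = X := by
    intro X; rw [← Matrix.mul_assoc, hMW, Matrix.one_mul]
  -- expand everything
  simp only [Matrix.transpose_add, Matrix.transpose_mul, Matrix.transpose_smul,
    Matrix.transpose_transpose, hMsym, neg_add, neg_sub,
    Matrix.add_mul, Matrix.mul_add, Matrix.neg_mul, Matrix.mul_neg,
    Matrix.smul_mul, Matrix.mul_smul, neg_smul, Matrix.mul_assoc,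
    sub_eq_add_neg, neg_neg, key]
  ring_nf
  simp only [Matrix.transpose_neg, Matrix.transpose_smul, Matrix.transpose_mul,
    Matrix.transpose_transpose, hMsym, hWM, Matrix.mul_one, Matrix.neg_mul,
    Matrix.smul_mul, Matrix.mul_assoc]
  module
end
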